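/- Let H and M be n×n complex matrices with M† = M, M·M = 1, and H = M · H† · M. Let E₀ ∈ ℝ, and let χ0, χ1, w0, w1 ∈ ℂⁿ be a Jordan chain at the real exceptional point: (H − E₀)·χ0 = 0, (H − E₀)·χ1 = χ0, (H† − E₀)·w0 = 0, (H† − E₀)·w1 = w0. Suppose M·χ0 = ρ₀·w0 and M·χ1 = ρ₀·w1 + d·w0 with ρ₀ ∈ ℂ, ρ₀ ≠ 0, d ∈ ℂ, and that the eigenvectors are normalized by ⟪w0, χ1⟫ = 1, ⟪w1, χ0⟫ = 1, and ⟪w1, χ1⟫ = 0. Then ρ₀ is a (nonzero) real number, and the coefficient c = d / ρ₀ is real. -/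
import Mathlib

open Matrix

noncomputable def herm {n : ℕ} (x y : Fin n → ℂ) : ℂ :=
  ∑ i, starRingEnd ℂ (x i) * y i

lemma herm_conj {n : ℕ} (x y : Fin n → ℂ) :
    herm x y = starRingEnd ℂ (herm y x) := by
  simp [herm, map_sum, mul_comm]

lemma herm_mulVec {n : ℕ} (A : Matrix (Fin n) (Fin n) ℂ) (x y : Fin n → ℂ) :
    herm (A.mulVec x) y = herm x (Aᴴ.mulVec y) := by
  simp only [herm, Matrix.mulVec, dotProduct, map_sum, _root_.map_mul,
    Finset.sum_mul, Finset.mul_sum, Matrix.conjTranspose_apply]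
  rw [Finset.sum_comm]
  apply Finset.sum_congr rfl
  intro i _
  apply Finset.sum_congr rfl
  intro j _
  simp [Complex.star_def]
  ring

lemma herm_smul_right {n : ℕ} (a : ℂ) (x y : Fin n → ℂ) :
    herm x (a • y) = a * herm x y := by
  simp [herm, Finset.mul_sum]; ring_nf
  apply Finset.sum_congr rfl; intro i _; ring

lemma herm_add_right {n : ℕ} (x y z : Fin n → ℂ) :
    herm x (y + z) = herm x y + herm x z := by
  simp [herm, mul_add, Finset.sum_add_distrib]

lemma herm_smul_left {n : ℕ} (a : ℂ) (x y : Fin n → ℂ) :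
    herm (a • x) y = starRingEnd ℂ a * herm x y := by
  rw [herm_conj, herm_smul_right, _root_.map_mul, ← herm_conj]

lemma herm_add_left {n : ℕ} (x y z : Fin n → ℂ) :
    herm (x + y) z = herm x z + herm y z := by
  rw [herm_conj, herm_add_right, map_add, ← herm_conj, ← herm_conj]

/-- For a mirror-adjoint symmetric Hamiltonian `H = M H† M` with Hermitian unitary
mirror `M` (`M† = M`, `M² = 1`) and a real exceptional point `E₀ ∈ ℝ` with Jordan chain
`χ0, χ1` (right) and `w0, w1` (left), if `M χ0 = ρ₀ w0` and `M χ1 = ρ₀ w1 + d w0`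
with `ρ₀ ≠ 0`, and the chain is normalized by `⟪w0, χ1⟫ = 1`, `⟪w1, χ0⟫ = 1`,
`⟪w1, χ1⟫ = 0`, then `ρ₀` is a (nonzero) real number and `c = d / ρ₀` is real. -/
theorem rho_real_and_c_real_at_real_EP (n : ℕ)
    (H M : Matrix (Fin n) (Fin n) ℂ)
    (hMH : Mᴴ = M) (hM2 : M * M = 1) (hH : H = M * Hᴴ * M)
    (E₀ : ℝ) (χ0 χ1 w0 w1 : Fin n → ℂ) (ρ₀ d : ℂ)
    (hχ0 : (H - (E₀ : ℂ) • (1 : Matrix (Fin n) (Fin n) ℂ)).mulVec χ0 = 0)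
    (hχ1 : (H - (E₀ : ℂ) • (1 : Matrix (Fin n) (Fin n) ℂ)).mulVec χ1 = χ0)
    (hw0 : (Hᴴ - (E₀ : ℂ) • (1 : Matrix (Fin n) (Fin n) ℂ)).mulVec w0 = 0)
    (hw1 : (Hᴴ - (E₀ : ℂ) • (1 : Matrix (Fin n) (Fin n) ℂ)).mulVec w1 = w0)
    (hMχ0 : M.mulVec χ0 = ρ₀ • w0)
    (hMχ1 : M.mulVec χ1 = ρ₀ • w1 + d • w0)
    (hρ₀ : ρ₀ ≠ 0)
    (hn1 : herm w0 χ1 = 1) (hn2 : herm w1 χ0 = 1) (hn3 : herm w1 χ1 = 0) :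
    ρ₀.im = 0 ∧ (d / ρ₀).im = 0 := by
  have hE : (H - (E₀ : ℂ) • (1 : Matrix (Fin n) (Fin n) ℂ))ᴴ
      = Hᴴ - (E₀ : ℂ) • (1 : Matrix (Fin n) (Fin n) ℂ) := by
    simp [Matrix.conjTranspose_sub, Matrix.conjTranspose_smul, Complex.conj_ofReal]
  -- ⟪w0, χ0⟫ = 0
  have h0 : herm w0 χ0 = 0 := by
    rw [herm_conj, ← hχ1, herm_mulVec, hE, hw0]
    simp [herm]
  -- ⟪χ0, w0⟫ = 0, ⟪χ0, w1⟫ = 1, ⟪χ1, w0⟫ = 1, ⟪χ1, w1⟫ = 0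
  have h0' : herm χ0 w0 = 0 := by rw [herm_conj, h0]; simp
  have h1' : herm χ0 w1 = 1 := by rw [herm_conj, hn2]; simp
  have h2' : herm χ1 w0 = 1 := by rw [herm_conj, hn1]; simp
  have h3' : herm χ1 w1 = 0 := by rw [herm_conj, hn3]; simp
  -- ρ₀ is real
  have hA : herm (M.mulVec χ0) χ1 = herm χ0 (M.mulVec χ1) := by
    rw [herm_mulVec, hMH]
  rw [hMχ0, hMχ1, herm_smul_left, hn1, herm_add_right, herm_smul_right,
    herm_smul_right, h1', h0'] at hA
  have hρreal : (starRingEnd ℂ) ρ₀ = ρ₀ := by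
    simpa using hA
  -- d is real
  have hB : herm (M.mulVec χ1) χ1 = herm χ1 (M.mulVec χ1) := by
    rw [herm_mulVec, hMH]
  rw [hMχ1, herm_add_left, herm_smul_left, herm_smul_left, hn1, hn3,
    herm_add_right, herm_smul_right, herm_smul_right, h2', h3'] at hB
  have hdreal : (starRingEnd ℂ) d = d := by
    simpa using hB
  have hρim : ρ₀.im = 0 := Complex.conj_eq_iff_im.mp hρreal
  have hdim : d.im = 0 := Complex.conj_eq_iff_im.mp hdreal
  refine ⟨hρim, ?_⟩
  simp [Complex.div_im, hρim, hdim]
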